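/- arXiv:2308.09050 — 3 statements merged into one kernel-verified Lean document; each statement's English description precedes it below -/
import Mathlib

section
/- If f : ℝ → ℝ is continuous with polynomial growth and attains a global minimum, then the infimum over all (μ, σ) ∈ ℝ × ℝ⁺ of F(μ, σ) = ∫ f(x) Γ_{μ,σ}(x) dx equals the minimum of f, where Γ_{μ,σ} is the Gaussian density with mean μ and standard deviation σ. -/
open Real MeasureTheory Filter Topology

noncomputable def gauss (μ σ x : ℝ) : ℝ :=
  Real.exp (-(x - μ)^2 / (2 * σ^2)) / (Real.sqrt (2 * Real.pi) * σ)

noncomputable def relaxF (f : ℝ → ℝ) (μ σ : ℝ) : ℝ := ∫ x : ℝ, f x * gauss μ σ x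

def PolyGrowth (f : ℝ → ℝ) : Prop :=
  ∃ m : ℝ, 0 < m ∧ Tendsto (fun x : ℝ => f x / |x| ^ m) (cocompact ℝ) (𝓝 0)

/-!
`relaxF f μ σ` is the expectation of `f` under the Gaussian law `N(μ, σ²)`, a probability
measure, so it is at least `min f`. Conversely, `relaxF f x̄ σ = 𝔼[f (x̄ + σ Z)]` with `Z`
standard normal; for `σ ≤ 1` the polynomial growth of `f` dominates the integrand by
`C (1 + |x̄| + |Z|)^m`, which is integrable because Gaussians have all moments, so dominated
convergence gives `relaxF f x̄ σ → f x̄` as `σ → 0⁺`.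
-/

open ProbabilityTheory NNReal

theorem PolyGrowth.exists_abs_le_mul_one_add_abs_rpow {f : ℝ → ℝ} (hg : PolyGrowth f)
    (hf : Continuous f) :
    ∃ m C : ℝ, 0 ≤ m ∧ ∀ x, |f x| ≤ C * (1 + |x|) ^ m := by
  obtain ⟨m, hm, hlim⟩ := hg
  have hfar : ∀ᶠ x in cocompact ℝ, |f x| ≤ (1 + |x|) ^ m := by
    filter_upwards [hlim.eventually (Ioo_mem_nhds neg_one_lt_zero one_pos),
      (isCompact_singleton (x := (0 : ℝ))).compl_mem_cocompact] with x hx hx0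
    have hpos : 0 < |x| ^ m := rpow_pos_of_pos (abs_pos.mpr hx0) m
    calc |f x| ≤ |x| ^ m := by
          rw [← div_le_one hpos, ← abs_of_pos hpos, ← abs_div]
          exact (abs_lt.mpr hx).le
      _ ≤ (1 + |x|) ^ m := by gcongr; linarith
  obtain ⟨K, hK, hKfar⟩ := hasBasis_cocompact.eventually_iff.mp hfar
  obtain ⟨M, hM⟩ := hK.exists_bound_of_continuousOn hf.continuousOn
  refine ⟨m, max M 1, hm.le, fun x => ?_⟩
  have hone : 1 ≤ (1 + |x|) ^ m := one_le_rpow (by linarith [abs_nonneg x]) hm.le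
  by_cases hx : x ∈ K
  · calc |f x| ≤ max M 1 := (hM x hx).trans (le_max_left M 1)
      _ ≤ max M 1 * (1 + |x|) ^ m := le_mul_of_one_le_right (by positivity) hone
  · calc |f x| ≤ (1 + |x|) ^ m := hKfar hx
      _ ≤ max M 1 * (1 + |x|) ^ m := le_mul_of_one_le_left (by positivity) (le_max_right M 1)

theorem gauss_eq_gaussianPDFReal (μ : ℝ) {σ : ℝ} (hσ : 0 ≤ σ) (x : ℝ) :
    gauss μ σ x = gaussianPDFReal μ (σ ^ 2).toNNReal x := by
  rw [gauss, gaussianPDFReal_def, Real.coe_toNNReal _ (sq_nonneg σ), sqrt_mul' _ (sq_nonneg σ),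
    sqrt_sq hσ]
  ring

theorem relaxF_eq_integral_gaussianReal (f : ℝ → ℝ) (μ : ℝ) {σ : ℝ} (hσ : 0 < σ) :
    relaxF f μ σ = ∫ x, f x ∂gaussianReal μ (σ ^ 2).toNNReal := by
  rw [integral_gaussianReal_eq_integral_smul (by simp [hσ.ne'])]
  simp only [relaxF, gauss_eq_gaussianPDFReal μ hσ.le, smul_eq_mul, mul_comm]

theorem gaussianReal_eq_map_affine (μ σ : ℝ) :
    gaussianReal μ (σ ^ 2).toNNReal = (gaussianReal 0 1).map (fun y => μ + σ * y) := by
  have hcomp : (fun y => μ + σ * y) = (μ + ·) ∘ (σ * ·) := rfl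
  rw [hcomp, ← Measure.map_map (by fun_prop) (by fun_prop), gaussianReal_map_const_mul,
    gaussianReal_map_const_add]
  congr 1
  · simp
  · ext; simp [sq_nonneg σ]

theorem integrable_add_abs_rpow_gaussianReal {c m : ℝ} (hc : 0 ≤ c) (hm : 0 ≤ m) (μ : ℝ)
    (v : ℝ≥0) : Integrable (fun x => (c + |x|) ^ m) (gaussianReal μ v) := by
  have hLp : MemLp (fun x => c + |x|) (ENNReal.ofReal m) (gaussianReal μ v) :=
    (memLp_const c).add (memLp_id_gaussianReal' _ ENNReal.ofReal_ne_top).norm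
  convert hLp.integrable_norm_rpow' using 2 with x
  rw [ENNReal.toReal_ofReal hm, norm_of_nonneg (by positivity)]

theorem relaxF_eq_integral_standard_gaussianReal {f : ℝ → ℝ} (hf : Continuous f) (μ : ℝ)
    {σ : ℝ} (hσ : 0 < σ) : relaxF f μ σ = ∫ y, f (μ + σ * y) ∂gaussianReal 0 1 := by
  rw [relaxF_eq_integral_gaussianReal f μ hσ, gaussianReal_eq_map_affine,
    integral_map (by fun_prop) hf.aestronglyMeasurable]

section GrowthBound

variable {f : ℝ → ℝ} {m C : ℝ}

theorem integrable_gaussianReal_of_abs_le (hf : Continuous f) (hm : 0 ≤ m)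
    (hbound : ∀ x, |f x| ≤ C * (1 + |x|) ^ m) (μ : ℝ) (v : ℝ≥0) :
    Integrable f (gaussianReal μ v) :=
  ((integrable_add_abs_rpow_gaussianReal zero_le_one hm μ v).const_mul C).mono'
    hf.aestronglyMeasurable (ae_of_all _ hbound)

theorem abs_comp_add_mul_le (hm : 0 ≤ m) (hbound : ∀ x, |f x| ≤ C * (1 + |x|) ^ m)
    (μ : ℝ) {σ : ℝ} (hσ : |σ| ≤ 1) (y : ℝ) :
    |f (μ + σ * y)| ≤ C * (1 + |μ| + |y|) ^ m := by
  have hC : 0 ≤ C := by simpa using (abs_nonneg _).trans (hbound 0)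
  have hshift : |μ + σ * y| ≤ |μ| + |y| := by
    calc |μ + σ * y| ≤ |μ| + |σ| * |y| := by rw [← abs_mul]; exact abs_add_le _ _
      _ ≤ |μ| + |y| := by gcongr; exact mul_le_of_le_one_left (abs_nonneg y) hσ
  calc |f (μ + σ * y)| ≤ C * (1 + |μ + σ * y|) ^ m := hbound _
    _ ≤ C * (1 + |μ| + |y|) ^ m := by gcongr C * ?_ ^ m; linarith

theorem tendsto_relaxF_nhdsGT_zero (hf : Continuous f) (hm : 0 ≤ m)
    (hbound : ∀ x, |f x| ≤ C * (1 + |x|) ^ m) (μ : ℝ) :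
    Tendsto (relaxF f μ) (𝓝[>] 0) (𝓝 (f μ)) := by
  have hstd : (fun σ => ∫ y, f (μ + σ * y) ∂gaussianReal 0 1) =ᶠ[𝓝[>] 0] relaxF f μ :=
    eventually_mem_nhdsWithin.mono fun σ hσ =>
      (relaxF_eq_integral_standard_gaussianReal hf μ hσ).symm
  refine Tendsto.congr' hstd ?_
  have hlim : f μ = ∫ y, f (μ + 0 * y) ∂gaussianReal 0 1 := by simp
  rw [hlim]
  refine tendsto_integral_filter_of_dominated_convergence (fun y => C * (1 + |μ| + |y|) ^ m)
    (Eventually.of_forall fun σ => by fun_prop) ?_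
    ((integrable_add_abs_rpow_gaussianReal (by positivity) hm 0 1).const_mul C)
    (ae_of_all _ fun y => ?_)
  · filter_upwards [Ioo_mem_nhdsGT one_pos] with σ hσ
    refine ae_of_all _ fun y => ?_
    exact abs_comp_add_mul_le hm hbound μ (abs_le.mpr ⟨by linarith [hσ.1], hσ.2.le⟩) y
  · exact ((hf.comp (by fun_prop)).tendsto 0).mono_left nhdsWithin_le_nhds

end GrowthBound

theorem stmt0 (f : ℝ → ℝ) (hf : Continuous f) (hg : PolyGrowth f)
    (xbar : ℝ) (hmin : ∀ x, f xbar ≤ f x) :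
    IsGLB {y : ℝ | ∃ μ σ : ℝ, 0 < σ ∧ y = relaxF f μ σ} (f xbar) := by
  obtain ⟨m, C, hm, hbound⟩ := hg.exists_abs_le_mul_one_add_abs_rpow hf
  constructor
  · rintro _ ⟨μ, σ, hσ, rfl⟩
    rw [relaxF_eq_integral_gaussianReal f μ hσ]
    calc f xbar = ∫ _, f xbar ∂gaussianReal μ (σ ^ 2).toNNReal := by simp
      _ ≤ _ := integral_mono (integrable_const _)
          (integrable_gaussianReal_of_abs_le hf hm hbound _ _) hmin
  · intro b hb
    exact ge_of_tendsto (tendsto_relaxF_nhdsGT_zero hf hm hbound xbar)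
      (eventually_mem_nhdsWithin.mono fun σ hσ => hb ⟨xbar, σ, hσ, rfl⟩)
end

section
/- The gradient of the relaxed functional F is given by ∂F/∂μ = ∫ ((x-μ)/σ²) f(x) Γ_{μ,σ}(x) dx and ∂F/∂σ = ∫ ((x-μ-σ)(x-μ+σ)/σ³) f(x) Γ_{μ,σ}(x) dx. -/
/-! Differentiate under the integral sign. Continuity and polynomial growth give
`|f x| ≤ C (1 + |x|)ⁿ`. For parameters `(m, s)` near `(μ, σ)` every Gaussian `Γ_{m,s}` is
dominated by one fixed wider Gaussian centred at `μ`, and the polynomial factors produced by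
differentiating `Γ` in `m` or `s` are absorbed into a Gaussian of smaller decay rate, since
`(1 + |y|)ⁿ ≤ exp (n |y|) ≤ exp (n² / 2a + a y² / 2)`. This gives a common integrable majorant. -/

open Real MeasureTheory Filter Topology

open Asymptotics in
theorem PolyGrowth.exists_abs_le {f : ℝ → ℝ} (hf : Continuous f) (hg : PolyGrowth f) :
    ∃ (C : ℝ) (n : ℕ), ∀ x, |f x| ≤ C * (1 + |x|) ^ n := by
  obtain ⟨m, -, ht⟩ := hg
  set n := ⌈m⌉₊
  have hcont : Continuous fun x => f x / (1 + |x|) ^ n :=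
    hf.div (by fun_prop) fun x => by positivity
  have hO : (fun x => f x / (1 + |x|) ^ n) =O[cocompact ℝ] (1 : ℝ → ℝ) := by
    refine IsBigO.trans (IsBigO.of_bound 1 ?_) (ht.isBigO_one ℝ)
    filter_upwards [tendsto_norm_cocompact_atTop.eventually_ge_atTop 1] with x hx
    rw [Real.norm_eq_abs] at hx
    have hpow : |x| ^ m ≤ (1 + |x|) ^ n :=
      calc |x| ^ m ≤ |x| ^ (n : ℝ) := rpow_le_rpow_of_exponent_le hx (Nat.le_ceil m)
        _ = |x| ^ n := rpow_natCast _ n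
        _ ≤ (1 + |x|) ^ n := by gcongr; linarith
    simp only [norm_div, Real.norm_eq_abs, one_mul,
      abs_of_pos (by positivity : (0 : ℝ) < (1 + |x|) ^ n),
      abs_of_pos (by positivity : (0 : ℝ) < |x| ^ m)]
    gcongr
  obtain ⟨C, hC⟩ := isBounded_iff_forall_norm_le.mp (hcont.isBounded_range_iff_isBigO.mpr hO)
  refine ⟨C, n, fun x => ?_⟩
  have := hC _ ⟨x, rfl⟩
  rwa [norm_div, Real.norm_eq_abs, Real.norm_of_nonneg (by positivity),
    div_le_iff₀ (by positivity)] at this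

theorem one_add_abs_pow_mul_exp_neg_mul_sq_le (n : ℕ) {a : ℝ} (ha : 0 < a) (y : ℝ) :
    (1 + |y|) ^ n * exp (-(a * y ^ 2)) ≤ exp (n ^ 2 / (2 * a)) * exp (-(a / 2 * y ^ 2)) := by
  have hpow : (1 + |y|) ^ n ≤ exp (n * |y|) := by
    rw [exp_nat_mul]
    gcongr
    linarith [add_one_le_exp |y|]
  have hamgm : n * |y| ≤ n ^ 2 / (2 * a) + a / 2 * y ^ 2 := by
    have := sq_nonneg (a * |y| - n)
    rw [← sq_abs y]
    field_simp
    nlinarith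
  calc (1 + |y|) ^ n * exp (-(a * y ^ 2)) ≤ exp (n * |y|) * exp (-(a * y ^ 2)) := by gcongr
    _ = exp (n * |y| - a * y ^ 2) := by rw [← exp_add]; ring_nf
    _ ≤ exp (n ^ 2 / (2 * a) - a / 2 * y ^ 2) := exp_le_exp.mpr (by linarith)
    _ = exp (n ^ 2 / (2 * a)) * exp (-(a / 2 * y ^ 2)) := by rw [← exp_add]; ring_nf

theorem PolyGrowth.integrable_mul_one_add_abs_pow_mul_exp {f : ℝ → ℝ} (hf : Continuous f)
    (hg : PolyGrowth f) (c : ℝ) {a : ℝ} (ha : 0 < a) (k : ℕ) :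
    Integrable fun x => f x * ((1 + |x - c|) ^ k * exp (-(a * (x - c) ^ 2))) := by
  obtain ⟨C, n, hC⟩ := hg.exists_abs_le hf
  have hC0 : 0 ≤ C := (abs_nonneg _).trans (by simpa using hC 0)
  have hshift : ∀ x, 1 + |x| ≤ (1 + |c|) * (1 + |x - c|) := fun x => by
    nlinarith [abs_sub_abs_le_abs_sub x c, abs_nonneg c, abs_nonneg (x - c)]
  refine Integrable.mono' (g := fun x => C * (1 + |c|) ^ n * exp ((n + k : ℕ) ^ 2 / (2 * a)) *
      exp (-(a / 2) * (x - c) ^ 2))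
    (((integrable_exp_neg_mul_sq (half_pos ha)).comp_sub_right c).const_mul _)
    (by fun_prop) (ae_of_all _ fun x => ?_)
  calc ‖f x * ((1 + |x - c|) ^ k * exp (-(a * (x - c) ^ 2)))‖
      = |f x| * ((1 + |x - c|) ^ k * exp (-(a * (x - c) ^ 2))) := by
        rw [norm_mul, Real.norm_eq_abs, Real.norm_of_nonneg (by positivity)]
    _ ≤ C * ((1 + |c|) * (1 + |x - c|)) ^ n * ((1 + |x - c|) ^ k * exp (-(a * (x - c) ^ 2))) := by
        gcongr
        exact (hC x).trans (by gcongr; exact hshift x)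
    _ = C * (1 + |c|) ^ n * ((1 + |x - c|) ^ (n + k) * exp (-(a * (x - c) ^ 2))) := by
        rw [mul_pow, pow_add]; ring
    _ ≤ C * (1 + |c|) ^ n *
          (exp ((n + k : ℕ) ^ 2 / (2 * a)) * exp (-(a / 2 * (x - c) ^ 2))) := by
        gcongr ?_ * ?_
        exact one_add_abs_pow_mul_exp_neg_mul_sq_le _ ha _
    _ = _ := by ring_nf

open Metric

theorem hasDerivAt_integral_mul_of_dominated {α : Type*} [MeasurableSpace α] {ν : Measure α}
    {f w : α → ℝ} {φ φ' : ℝ → α → ℝ} {t₀ ε : ℝ} (hε : 0 < ε)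
    (hf : AEStronglyMeasurable f ν) (hφ : ∀ t, AEStronglyMeasurable (φ t) ν)
    (hφ' : AEStronglyMeasurable (φ' t₀) ν)
    (hfφ : Integrable (fun x => f x * φ t₀ x) ν) (hfw : Integrable (fun x => f x * w x) ν)
    (hderiv : ∀ x, ∀ t ∈ ball t₀ ε, HasDerivAt (φ · x) (φ' t x) t)
    (hbound : ∀ x, ∀ t ∈ ball t₀ ε, |φ' t x| ≤ w x) :
    HasDerivAt (fun t => ∫ x, f x * φ t x ∂ν) (∫ x, f x * φ' t₀ x ∂ν) t₀ := by
  refine (hasDerivAt_integral_of_dominated_loc_of_deriv_le (ball_mem_nhds t₀ hε)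
    (Eventually.of_forall fun t => hf.mul (hφ t)) hfφ (hf.mul hφ')
    (ae_of_all _ fun x t ht => ?_) hfw.norm
    (ae_of_all _ fun x t ht => (hderiv x t ht).const_mul (f x))).2
  rw [norm_mul, norm_mul, Real.norm_eq_abs (φ' t x),
    Real.norm_of_nonneg ((abs_nonneg _).trans (hbound x t ht))]
  gcongr
  exact hbound x t ht

@[fun_prop]
theorem continuous_gauss (μ σ : ℝ) : Continuous fun x => gauss μ σ x := by
  unfold gauss; fun_prop

theorem hasDerivAt_gauss_mean {σ : ℝ} (hσ : σ ≠ 0) (x m : ℝ) :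
    HasDerivAt (fun m => gauss m σ x) ((x - m) / σ ^ 2 * gauss m σ x) m := by
  have hexp : HasDerivAt (fun m => -(x - m) ^ 2 / (2 * σ ^ 2)) ((x - m) / σ ^ 2) m :=
    ((((hasDerivAt_id' m).const_sub x).pow 2).neg.div_const (2 * σ ^ 2)).congr_deriv
      (by field_simp; ring)
  exact (hexp.exp.div_const (√(2 * π) * σ)).congr_deriv (by unfold gauss; ring)

theorem hasDerivAt_gauss_scale (μ x : ℝ) {s : ℝ} (hs : s ≠ 0) :
    HasDerivAt (fun s => gauss μ s x) ((x - μ - s) * (x - μ + s) / s ^ 3 * gauss μ s x) s := by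
  have hexp : HasDerivAt (fun s => -(x - μ) ^ 2 / (2 * s ^ 2)) ((x - μ) ^ 2 / s ^ 3) s :=
    ((hasDerivAt_const s (-(x - μ) ^ 2)).div ((hasDerivAt_pow 2 s).const_mul 2)
      (by positivity)).congr_deriv (by field_simp; ring)
  exact (hexp.exp.div ((hasDerivAt_id' s).const_mul (√(2 * π))) (by positivity)).congr_deriv
    (by unfold gauss; field_simp; ring)

theorem gauss_pos (μ x : ℝ) {σ : ℝ} (hσ : 0 < σ) : 0 < gauss μ σ x := by
  unfold gauss; positivity

theorem gauss_le_mul_exp_neg_mul_sq {μ σ m s : ℝ} (hσ : 0 < σ) (hm : |m - μ| ≤ σ)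
    (hs : σ / 2 ≤ s) (hs' : s ≤ 3 * σ / 2) (x : ℝ) :
    gauss m s x ≤ 2 * exp (2 / 9) / (√(2 * π) * σ) * exp (-(1 / (9 * σ ^ 2) * (x - μ) ^ 2)) := by
  have hspos : 0 < s := by linarith
  have hsq : (x - μ) ^ 2 ≤ 2 * (x - m) ^ 2 + 2 * σ ^ 2 := by
    nlinarith [sq_nonneg (x - m - (m - μ)), sq_abs (m - μ), abs_nonneg (m - μ)]
  have hwidth : 2 / (9 * σ ^ 2) ≤ 1 / (2 * s ^ 2) := by
    rw [div_le_div_iff₀ (by positivity) (by positivity)]; nlinarith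
  have hexp : -(x - m) ^ 2 / (2 * s ^ 2) ≤ 2 / 9 + -(1 / (9 * σ ^ 2) * (x - μ) ^ 2) :=
    calc -(x - m) ^ 2 / (2 * s ^ 2) = -((x - m) ^ 2 * (1 / (2 * s ^ 2))) := by ring
      _ ≤ -((x - m) ^ 2 * (2 / (9 * σ ^ 2))) := by gcongr
      _ ≤ 2 / 9 + -(1 / (9 * σ ^ 2) * (x - μ) ^ 2) := by
        field_simp; linarith
  have hnorm : 1 / (√(2 * π) * s) ≤ 2 / (√(2 * π) * σ) := by
    rw [div_le_div_iff₀ (by positivity) (by positivity)]; nlinarith [sqrt_nonneg (2 * π)]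
  calc gauss m s x = exp (-(x - m) ^ 2 / (2 * s ^ 2)) * (1 / (√(2 * π) * s)) := by
        unfold gauss; ring
    _ ≤ exp (2 / 9 + -(1 / (9 * σ ^ 2) * (x - μ) ^ 2)) * (2 / (√(2 * π) * σ)) := by gcongr
    _ = _ := by rw [exp_add]; ring

theorem PolyGrowth.integrable_mul_gauss {f : ℝ → ℝ} (hf : Continuous f) (hg : PolyGrowth f)
    (μ : ℝ) {σ : ℝ} (hσ : 0 < σ) : Integrable fun x => f x * gauss μ σ x := by
  set C := 2 * exp (2 / 9) / (√(2 * π) * σ)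
  have hC : 0 ≤ C := by positivity
  refine (((hg.integrable_mul_one_add_abs_pow_mul_exp hf μ (a := 1 / (9 * σ ^ 2)) (by positivity)
    0).const_mul C).norm.mono' (by fun_prop) (ae_of_all _ fun x => ?_))
  rw [norm_mul, norm_mul, norm_mul, Real.norm_of_nonneg (gauss_pos μ x hσ).le,
    Real.norm_of_nonneg hC, pow_zero, one_mul, Real.norm_of_nonneg (exp_pos _).le, mul_left_comm]
  gcongr
  exact gauss_le_mul_exp_neg_mul_sq (m := μ) (s := σ) hσ (by simp [hσ.le]) (by linarith)
    (by linarith) x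

theorem PolyGrowth.hasDerivAt_relaxF_mean {f : ℝ → ℝ} (hf : Continuous f) (hg : PolyGrowth f)
    (μ : ℝ) {σ : ℝ} (hσ : 0 < σ) :
    HasDerivAt (fun m => relaxF f m σ) (∫ x, ((x - μ) / σ ^ 2) * f x * gauss μ σ x) μ := by
  set K := (1 + σ) / σ ^ 2 * (2 * exp (2 / 9) / (√(2 * π) * σ))
  have hw := (hg.integrable_mul_one_add_abs_pow_mul_exp hf μ (a := 1 / (9 * σ ^ 2)) (by positivity)
    1).const_mul K
  have hbound : ∀ x, ∀ m ∈ ball μ σ, |(x - m) / σ ^ 2 * gauss m σ x| ≤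
      K * ((1 + |x - μ|) ^ 1 * exp (-(1 / (9 * σ ^ 2) * (x - μ) ^ 2))) := by
    intro x m hm
    rw [mem_ball, dist_eq_norm, Real.norm_eq_abs] at hm
    have hdist : |x - m| ≤ (1 + σ) * (1 + |x - μ|) := by
      nlinarith [abs_sub_le x μ m, abs_sub_comm μ m, abs_nonneg (x - μ)]
    have hgauss := gauss_le_mul_exp_neg_mul_sq (s := σ) hσ hm.le (by linarith) (by linarith) x
    rw [abs_mul, abs_div, abs_of_pos (gauss_pos m x hσ), abs_of_pos (by positivity : 0 < σ ^ 2)]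
    calc |x - m| / σ ^ 2 * gauss m σ x
        ≤ (1 + σ) * (1 + |x - μ|) / σ ^ 2 *
          (2 * exp (2 / 9) / (√(2 * π) * σ) * exp (-(1 / (9 * σ ^ 2) * (x - μ) ^ 2))) :=
          mul_le_mul (by gcongr) hgauss (gauss_pos m x hσ).le (by positivity)
      _ = _ := by ring
  have key := hasDerivAt_integral_mul_of_dominated hσ hf.aestronglyMeasurable
    (fun m => (continuous_gauss m σ).aestronglyMeasurable)
    (by fun_prop) (hg.integrable_mul_gauss hf μ hσ) (by simpa only [mul_left_comm] using hw)
    (fun x m _ => hasDerivAt_gauss_mean hσ.ne' x m) hbound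
  exact key.congr_deriv (integral_congr_ae (ae_of_all _ fun x => by ring))

theorem PolyGrowth.hasDerivAt_relaxF_scale {f : ℝ → ℝ} (hf : Continuous f) (hg : PolyGrowth f)
    (μ : ℝ) {σ : ℝ} (hσ : 0 < σ) :
    HasDerivAt (fun s => relaxF f μ s)
      (∫ x, ((x - μ - σ) * (x - μ + σ) / σ ^ 3) * f x * gauss μ σ x) σ := by
  set K := (1 + 9 * σ ^ 2 / 4) * (8 / σ ^ 3) * (2 * exp (2 / 9) / (√(2 * π) * σ))
  have hw := (hg.integrable_mul_one_add_abs_pow_mul_exp hf μ (a := 1 / (9 * σ ^ 2)) (by positivity)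
    2).const_mul K
  have hbound : ∀ x, ∀ s ∈ ball σ (σ / 2), |(x - μ - s) * (x - μ + s) / s ^ 3 * gauss μ s x| ≤
      K * ((1 + |x - μ|) ^ 2 * exp (-(1 / (9 * σ ^ 2) * (x - μ) ^ 2))) := by
    intro x s hs
    rw [mem_ball, dist_eq_norm, Real.norm_eq_abs, abs_lt] at hs
    have hspos : 0 < s := by linarith
    have hpoly : |(x - μ - s) * (x - μ + s)| ≤ (1 + 9 * σ ^ 2 / 4) * (1 + |x - μ|) ^ 2 := by
      rw [abs_le]; constructor <;> nlinarith [abs_nonneg (x - μ), sq_abs (x - μ)]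
    have hcube : 1 / s ^ 3 ≤ 8 / σ ^ 3 := by
      rw [div_le_div_iff₀ (by positivity) (by positivity)]
      nlinarith [pow_le_pow_left₀ (by positivity) (by linarith : σ / 2 ≤ s) 3]
    have hgauss := gauss_le_mul_exp_neg_mul_sq (μ := μ) (m := μ) (s := s) hσ (by simp [hσ.le])
      (by linarith) (by linarith) x
    rw [abs_mul, abs_div, abs_of_pos (gauss_pos μ x hspos), abs_of_pos (by positivity : 0 < s ^ 3)]
    calc |(x - μ - s) * (x - μ + s)| / s ^ 3 * gauss μ s x
        = |(x - μ - s) * (x - μ + s)| * (1 / s ^ 3) * gauss μ s x := by ring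
      _ ≤ (1 + 9 * σ ^ 2 / 4) * (1 + |x - μ|) ^ 2 * (8 / σ ^ 3) *
          (2 * exp (2 / 9) / (√(2 * π) * σ) * exp (-(1 / (9 * σ ^ 2) * (x - μ) ^ 2))) :=
          mul_le_mul (by gcongr) hgauss (gauss_pos μ x hspos).le (by positivity)
      _ = _ := by ring
  have key := hasDerivAt_integral_mul_of_dominated (by positivity) hf.aestronglyMeasurable
    (fun s => (continuous_gauss μ s).aestronglyMeasurable)
    (by fun_prop) (hg.integrable_mul_gauss hf μ hσ) (by simpa only [mul_left_comm] using hw)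
    (fun x s hs => hasDerivAt_gauss_scale μ x
      (by rw [mem_ball, Real.dist_eq, abs_lt] at hs; linarith)) hbound
  exact key.congr_deriv (integral_congr_ae (ae_of_all _ fun x => by ring))

theorem stmt6 (f : ℝ → ℝ) (hf : Continuous f) (hg : PolyGrowth f)
    (μ σ : ℝ) (hσ : 0 < σ) :
    HasDerivAt (fun m => relaxF f m σ)
      (∫ x : ℝ, ((x - μ) / σ^2) * f x * gauss μ σ x) μ ∧
    HasDerivAt (fun s => relaxF f μ s)
      (∫ x : ℝ, ((x - μ - σ) * (x - μ + σ) / σ^3) * f x * gauss μ σ x) σ :=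
  ⟨hg.hasDerivAt_relaxF_mean hf μ hσ, hg.hasDerivAt_relaxF_scale hf μ hσ⟩
end

section
/- Let z : [0,T] → [0,∞) be differentiable with z(0) = 0 and satisfy ż ≤ 2ε√z - 4cz for constants ε > 0 and c ≠ 0. Then √(z(t)) ≤ ε(1 - e^{-2ct})/(2c) for all 0 ≤ t ≤ T; if instead c = 0, then √(z(t)) ≤ εt. -/
open Real Set Filter Topology

/-
If `A' = 1 - 2cA` and `A ≥ 0`, then for every `δ > 0` the function `g = (ε + δ) A + δ e^{-2ct}`
satisfies `g' = (ε + δ) - 2cg` and `g > 0`, so `g²` is a strict supersolution of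
`ż = 2ε√z - 4cz`. The comparison principle gives `z ≤ g²`, hence `√z ≤ g`, and letting `δ → 0`
yields `√z ≤ εA`. The two cases of the theorem are `A = (1 - e^{-2ct})/(2c)` and `A = t`.
-/

section Comparison

variable {T ε c : ℝ} {z : ℝ → ℝ}

theorem le_sq_of_hasDerivAt_sub_mul (hzdiff : ∀ t ∈ Icc 0 T, DifferentiableAt ℝ z t)
    (hode : ∀ t ∈ Icc 0 T, deriv z t ≤ 2 * ε * √(z t) - 4 * c * z t)
    {ε' : ℝ} (hεε' : ε < ε') {g : ℝ → ℝ} (hg : ∀ s, HasDerivAt g (ε' - 2 * c * g s) s)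
    (hgpos : ∀ s ∈ Icc 0 T, 0 < g s) (hz0 : z 0 ≤ g 0 ^ 2) :
    ∀ t ∈ Icc 0 T, z t ≤ g t ^ 2 := by
  refine image_le_of_deriv_right_lt_deriv_boundary
    (fun t ht => (hzdiff t ht).continuousAt.continuousWithinAt)
    (fun t ht => (hzdiff t (Ico_subset_Icc_self ht)).hasDerivAt.hasDerivWithinAt) hz0
    (fun s => (hg s).pow 2) fun t ht hzt => ?_
  have hgt := hgpos t (Ico_subset_Icc_self ht)
  have hsqrt : √(z t) = g t := by rw [hzt, sqrt_sq hgt.le]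
  have := hode t (Ico_subset_Icc_self ht)
  rw [hsqrt, hzt] at this
  push_cast
  nlinarith

theorem hasDerivAt_exp_neg_two_mul (c s : ℝ) :
    HasDerivAt (fun u => exp (-2 * c * u)) (-2 * c * exp (-2 * c * s)) s := by
  simpa [mul_comm] using ((hasDerivAt_id s).const_mul (-2 * c)).exp

theorem sqrt_le_mul_of_hasDerivAt (hε : 0 ≤ ε) (hz0 : z 0 = 0)
    (hzdiff : ∀ t ∈ Icc 0 T, DifferentiableAt ℝ z t)
    (hode : ∀ t ∈ Icc 0 T, deriv z t ≤ 2 * ε * √(z t) - 4 * c * z t)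
    {A : ℝ → ℝ} (hA : ∀ s, HasDerivAt A (1 - 2 * c * A s) s)
    (hA_nonneg : ∀ s ∈ Icc 0 T, 0 ≤ A s) :
    ∀ t ∈ Icc 0 T, √(z t) ≤ ε * A t := by
  intro t ht
  have hbound : ∀ δ > 0, √(z t) ≤ (ε + δ) * A t + δ * exp (-2 * c * t) := by
    intro δ hδ
    set g : ℝ → ℝ := fun s => (ε + δ) * A s + δ * exp (-2 * c * s)
    have hgpos : ∀ s ∈ Icc 0 T, 0 < g s := fun s hs => by
      have := hA_nonneg s hs
      positivity
    have hg : ∀ s, HasDerivAt g (ε + δ - 2 * c * g s) s := fun s =>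
      (((hA s).const_mul (ε + δ)).add ((hasDerivAt_exp_neg_two_mul c s).const_mul δ)).congr_deriv
        (by ring)
    have hle := le_sq_of_hasDerivAt_sub_mul hzdiff hode (lt_add_of_pos_right ε hδ) hg hgpos
      (by rw [hz0]; positivity) t ht
    exact (sqrt_le_sqrt hle).trans_eq (sqrt_sq (hgpos t ht).le)
  have hlim : Tendsto (fun δ => (ε + δ) * A t + δ * exp (-2 * c * t)) (𝓝[>] 0)
      (𝓝 (ε * A t)) := by
    have : Continuous fun δ => (ε + δ) * A t + δ * exp (-2 * c * t) := by fun_prop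
    simpa using (this.tendsto 0).mono_left nhdsWithin_le_nhds
  exact ge_of_tendsto hlim (eventually_nhdsWithin_of_forall hbound)

end Comparison

theorem div_two_mul_one_sub_exp_nonneg {c s : ℝ} (hc : c ≠ 0) (hs : 0 ≤ s) :
    0 ≤ (1 - exp (-2 * c * s)) / (2 * c) := by
  rcases hc.lt_or_gt with hc | hc
  · refine div_nonneg_of_nonpos ?_ (by linarith)
    linarith [one_le_exp (by nlinarith : 0 ≤ -2 * c * s)]
  · refine div_nonneg ?_ (by linarith)
    linarith [exp_le_one_iff.mpr (by nlinarith : -2 * c * s ≤ 0)]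

theorem stmt13_general (T ε c : ℝ) (hε : 0 < ε)
    (z : ℝ → ℝ) (hz0 : z 0 = 0)
    (hzdiff : ∀ t ∈ Icc 0 T, DifferentiableAt ℝ z t)
    (hode : ∀ t ∈ Icc 0 T,
      deriv z t ≤ 2 * ε * Real.sqrt (z t) - 4 * c * z t) :
    ∀ t ∈ Icc 0 T,
      (c ≠ 0 → Real.sqrt (z t) ≤ ε * (1 - Real.exp (-2 * c * t)) / (2 * c)) ∧
      (c = 0 → Real.sqrt (z t) ≤ ε * t) := by
  intro t ht
  refine ⟨fun hc => ?_, fun hc => ?_⟩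
  · have hA : ∀ s, HasDerivAt (fun u => (1 - exp (-2 * c * u)) / (2 * c))
        (1 - 2 * c * ((1 - exp (-2 * c * s)) / (2 * c))) s := fun s =>
      (((hasDerivAt_const s 1).sub (hasDerivAt_exp_neg_two_mul c s)).div_const (2 * c)).congr_deriv
        (by field_simp; ring)
    rw [mul_div_assoc]
    exact sqrt_le_mul_of_hasDerivAt hε.le hz0 hzdiff hode hA
      (fun s hs => div_two_mul_one_sub_exp_nonneg hc hs.1) t ht
  · subst hc
    exact sqrt_le_mul_of_hasDerivAt hε.le hz0 hzdiff hode (A := id)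
      (fun s => by simpa using hasDerivAt_id s) (fun s hs => hs.1) t ht

theorem stmt13 (T ε c : ℝ) (hT : 0 ≤ T) (hε : 0 < ε)
    (z : ℝ → ℝ) (hz0 : z 0 = 0) (hznn : ∀ t ∈ Icc 0 T, 0 ≤ z t)
    (hzdiff : ∀ t ∈ Icc 0 T, DifferentiableAt ℝ z t)
    (hode : ∀ t ∈ Icc 0 T,
      deriv z t ≤ 2 * ε * Real.sqrt (z t) - 4 * c * z t) :
    ∀ t ∈ Icc 0 T,
      (c ≠ 0 → Real.sqrt (z t) ≤ ε * (1 - Real.exp (-2 * c * t)) / (2 * c)) ∧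
      (c = 0 → Real.sqrt (z t) ≤ ε * t) :=
  stmt13_general T ε c hε z hz0 hzdiff hode
end
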